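/- For the Walsh-Paley system and 0 < p < 1, the function f_n = D_{2^{2n+1}} − D_{2^{2n}} satisfies: S_{2^{2n}+1} f_n = w_{2^{2n}}, hence |S_{2^{2n}+1} f_n(x)| = 1 for every x ∈ G, so ‖S_{2^{2n}+1} f_n‖_{L^{p,∞}} = 1 while ‖f_n‖_{H_p} ≤ c_p · 2^{2n(1−1/p)}; consequently ‖S_{2^{2n}+1} f_n‖_{L^{p,∞}} / ‖f_n‖_{H_p} ≥ c_p^{-1} 2^{2n(1/p−1)} → ∞ as n → ∞. -/

import Mathlib

open MeasureTheory ENNReal Filter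
open scoped Classical

noncomputable section

instance : TopologicalSpace (ZMod 2) := ⊥
instance : DiscreteTopology (ZMod 2) := ⟨rfl⟩
instance : MeasurableSpace (ZMod 2) := ⊤
instance : BorelSpace (ZMod 2) := ⟨borel_eq_top_of_discrete.symm⟩
instance : IsTopologicalAddGroup (ZMod 2) where
  continuous_add := continuous_of_discreteTopology
  continuous_neg := continuous_of_discreteTopology

/-- The dyadic group `G = (ℤ/2)^ℕ`. -/
abbrev G2 : Type := ℕ → ZMod 2

/-- Normalized Haar (probability) measure on `G2`. -/
def muG : Measure G2 :=
  Measure.addHaarMeasure ⟨⟨Set.univ, isCompact_univ⟩, by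
    rw [interior_univ]; exact Set.univ_nonempty⟩

/-- Rademacher functions. -/
def rad (k : ℕ) (x : G2) : ℝ := (-1 : ℝ) ^ ((x k).val)

/-- Walsh–Paley functions. -/
def walsh (n : ℕ) (x : G2) : ℝ :=
  ∏ k ∈ Finset.range n, if n.testBit k then rad k x else 1

/-- Walsh–Dirichlet kernels. -/
def dirichlet (n : ℕ) (x : G2) : ℝ := ∑ k ∈ Finset.range n, walsh k x

/-- The cylinder sets `I_n`. -/
def cyl (n : ℕ) : Set G2 := {x | ∀ i < n, x i = 0}

/-- Walsh–Fourier coefficients. -/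
def fhat (f : G2 → ℝ) (k : ℕ) : ℝ := ∫ x, f x * walsh k x ∂muG

/-- Walsh–Fourier partial sums of a function. -/
def funS (f : G2 → ℝ) (n : ℕ) (x : G2) : ℝ :=
  ∑ k ∈ Finset.range n, fhat f k * walsh k x

/-- Partial sums of the Walsh series of a dyadic martingale given by coefficients `c`. -/
def mS (c : ℕ → ℝ) (n : ℕ) (x : G2) : ℝ := ∑ k ∈ Finset.range n, c k * walsh k x

/-- The martingale maximal function. -/
def mMax (c : ℕ → ℝ) (x : G2) : ℝ≥0∞ := ⨆ n : ℕ, (‖mS c (2 ^ n) x‖₊ : ℝ≥0∞)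

/-- The martingale Hardy space quasi-norm `H_p`. -/
def mHp (p : ℝ) (c : ℕ → ℝ) : ℝ≥0∞ := (∫⁻ x, (mMax c x) ^ p ∂muG) ^ (1 / p)

/-- The maximal function of an integrable function. -/
def funMax (f : G2 → ℝ) (x : G2) : ℝ≥0∞ := ⨆ n : ℕ, (‖funS f (2 ^ n) x‖₊ : ℝ≥0∞)

/-- The Hardy space quasi-norm of an integrable function. -/
def funHp (p : ℝ) (f : G2 → ℝ) : ℝ≥0∞ := (∫⁻ x, (funMax f x) ^ p ∂muG) ^ (1 / p)

/-- Weak `L^p` quasi-norm. -/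
def weakLp (p : ℝ) (f : G2 → ℝ) : ℝ≥0∞ :=
  ⨆ t : NNReal, (t : ℝ≥0∞) * (muG {x | (t : ℝ) < |f x|}) ^ (1 / p)


/-- `f_n = D_{2^{2n+1}} - D_{2^{2n}}`. -/
def fwn (n : ℕ) (x : G2) : ℝ := dirichlet (2 ^ (2 * n + 1)) x - dirichlet (2 ^ (2 * n)) x

/-! The Walsh–Fourier coefficients of `f_n = D_{2^{2n+1}} - D_{2^{2n}}` are the indicator of the
dyadic block `[2^{2n}, 2^{2n+1})`, by orthonormality of the Walsh system; so the partial sum of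
order `2^{2n} + 1` is the single unimodular function `w_{2^{2n}}`, of weak `L^p` norm `1`.
On the other hand `D_{2^m} = 2^m 𝟙_{I_m}`, so `|f_n| = 2^{2n} 𝟙_{I_{2n}}`, and each dyadic partial
sum of `f_n` is `0` or `f_n`. Hence the maximal function of `f_n` is `|f_n|` and
`‖f_n‖_{H_p} = 2^{2n} μ(I_{2n})^{1/p} = 2^{2n(1-1/p)}`, which tends to `0` when `p < 1`. -/

instance : IsProbabilityMeasure muG :=
  ⟨Measure.addHaarMeasure_self⟩

instance : muG.IsAddLeftInvariant := by
  unfold muG; infer_instance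

lemma rad_mul_self (k : ℕ) (x : G2) : rad k x * rad k x = 1 := by
  rw [rad, ← pow_add, Even.neg_one_pow ⟨_, rfl⟩]

lemma abs_rad (k : ℕ) (x : G2) : |rad k x| = 1 := by
  simp [rad]

lemma measurable_rad (k : ℕ) : Measurable (rad k) :=
  (measurable_from_top (f := fun a : ZMod 2 => (-1 : ℝ) ^ a.val)).comp (measurable_pi_apply k)

lemma rad_add_single_self (i : ℕ) (x : G2) : rad i (x + Pi.single i 1) = -rad i x := by
  simp only [rad, Pi.add_apply, Pi.single_eq_same]
  rw [ZMod.val_add, ← neg_one_pow_eq_pow_mod_two, ZMod.val_one, pow_succ, mul_neg_one]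

lemma rad_add_single_of_ne {i j : ℕ} (h : j ≠ i) (x : G2) :
    rad j (x + Pi.single i 1) = rad j x := by
  simp [rad, Pi.single_eq_of_ne h]

lemma lt_two_pow_of_le {n N : ℕ} (h : n ≤ N) : n < 2 ^ N :=
  Nat.lt_two_pow_self.trans_le (Nat.pow_le_pow_right two_pos h)

lemma walsh_eq_prod_range {n N : ℕ} (h : n < 2 ^ N) (x : G2) :
    walsh n x = ∏ k ∈ Finset.range N, if n.testBit k then rad k x else 1 := by
  have hbit : ∀ k, n ≤ k ∨ N ≤ k → n.testBit k = false := fun k hk =>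
    Nat.testBit_lt_two_pow <| hk.elim lt_two_pow_of_le
      fun hk => h.trans_le (Nat.pow_le_pow_right two_pos hk)
  rw [walsh]
  rcases le_total n N with hnN | hNn
  · refine Finset.prod_subset (Finset.range_subset_range.2 hnN) fun k _ hk => ?_
    simp [hbit k (.inl (by simpa using hk))]
  · refine (Finset.prod_subset (Finset.range_subset_range.2 hNn) fun k _ hk => ?_).symm
    simp [hbit k (.inr (by simpa using hk))]

lemma walsh_zero (x : G2) : walsh 0 x = 1 := by simp [walsh]

lemma walsh_mul (j k : ℕ) (x : G2) : walsh j x * walsh k x = walsh (j ^^^ k) x := by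
  have hj : j < 2 ^ (j + k) := lt_two_pow_of_le (by omega)
  have hk : k < 2 ^ (j + k) := lt_two_pow_of_le (by omega)
  rw [walsh_eq_prod_range hj, walsh_eq_prod_range hk,
    walsh_eq_prod_range (Nat.xor_lt_two_pow hj hk), ← Finset.prod_mul_distrib]
  refine Finset.prod_congr rfl fun i _ => ?_
  rw [Nat.testBit_xor]
  cases j.testBit i <;> cases k.testBit i <;> simp [rad_mul_self]

lemma walsh_two_pow_add {m k : ℕ} (hk : k < 2 ^ m) (x : G2) :
    walsh (2 ^ m + k) x = rad m x * walsh k x := by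
  have hlt : 2 ^ m + k < 2 ^ (m + 1) := by rw [pow_succ]; omega
  rw [walsh_eq_prod_range hlt, walsh_eq_prod_range hk, Finset.prod_range_succ, mul_comm,
    Nat.testBit_two_pow_add_eq, Nat.testBit_lt_two_pow hk]
  congr 1
  exact Finset.prod_congr rfl fun i hi => by
    rw [Nat.testBit_two_pow_add_gt (Finset.mem_range.1 hi)]

lemma abs_walsh (n : ℕ) (x : G2) : |walsh n x| = 1 := by
  rw [walsh, Finset.abs_prod]
  exact Finset.prod_eq_one fun k _ => by split_ifs <;> simp [abs_rad]

lemma measurable_walsh (n : ℕ) : Measurable (walsh n) :=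
  Finset.measurable_prod _ fun k _ => by
    split_ifs
    exacts [measurable_rad k, measurable_const]

lemma integrable_walsh (n : ℕ) : Integrable (walsh n) muG :=
  (integrable_const (1 : ℝ)).mono' (measurable_walsh n).aestronglyMeasurable
    (.of_forall fun x => (abs_walsh n x).le)

lemma walsh_add_single_of_testBit {k i : ℕ} (hi : k.testBit i) (x : G2) :
    walsh k (x + Pi.single i 1) = -walsh k x := by
  have hk : k < 2 ^ (k + i + 1) := lt_two_pow_of_le (by omega)
  have hiN : i ∈ Finset.range (k + i + 1) := Finset.mem_range.2 (by omega)
  rw [walsh_eq_prod_range hk, walsh_eq_prod_range hk, ← Finset.mul_prod_erase _ _ hiN,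
    ← Finset.mul_prod_erase _ _ hiN, Finset.prod_congr rfl fun j hj => by
      rw [rad_add_single_of_ne (Finset.ne_of_mem_erase hj)]]
  simp [hi, rad_add_single_self]

-- Translating by the `i`-th unit vector, with `i` a binary digit of `k`, flips the sign of `w_k`.
lemma integral_walsh_of_ne_zero {k : ℕ} (hk : k ≠ 0) : ∫ x, walsh k x ∂muG = 0 := by
  obtain ⟨i, hi⟩ := Nat.exists_testBit_of_ne_zero hk
  have h := integral_add_left_eq_self (μ := muG) (walsh k) (Pi.single i 1)
  simp only [add_comm (Pi.single i 1 : G2), walsh_add_single_of_testBit hi, integral_neg] at h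
  linarith

lemma integral_walsh_mul_walsh (j k : ℕ) :
    ∫ x, walsh j x * walsh k x ∂muG = if j = k then 1 else 0 := by
  simp_rw [walsh_mul]
  split_ifs with h
  · simp [h, walsh_zero]
  · exact integral_walsh_of_ne_zero (by simpa using h)

lemma fhat_sum_walsh (s : Finset ℕ) (k : ℕ) :
    fhat (fun x => ∑ j ∈ s, walsh j x) k = if k ∈ s then 1 else 0 := by
  simp_rw [fhat, Finset.sum_mul]
  rw [integral_finsetSum _ fun j _ => by simpa only [walsh_mul] using integrable_walsh (j ^^^ k)]
  simp_rw [integral_walsh_mul_walsh, Finset.sum_ite_eq']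

lemma funS_sum_walsh (s : Finset ℕ) (N : ℕ) (x : G2) :
    funS (fun x => ∑ j ∈ s, walsh j x) N x = ∑ k ∈ Finset.range N ∩ s, walsh k x := by
  simp_rw [funS, fhat_sum_walsh, ite_mul, one_mul, zero_mul, ← Finset.sum_filter,
    Finset.filter_mem_eq_inter]

lemma dirichlet_two_pow_succ (m : ℕ) (x : G2) :
    dirichlet (2 ^ (m + 1)) x = (1 + rad m x) * dirichlet (2 ^ m) x := by
  rw [dirichlet, pow_succ, mul_two, Finset.sum_range_add, Finset.sum_congr rfl fun k hk =>
    walsh_two_pow_add (Finset.mem_range.1 hk) x, ← Finset.mul_sum, dirichlet]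
  ring

lemma cyl_succ (m : ℕ) : cyl (m + 1) = cyl m ∩ {x | x m = 0} := by
  ext x
  simp only [cyl, Set.mem_ofPred_eq, Set.mem_inter_iff, Nat.lt_succ_iff_lt_or_eq, or_imp,
    forall_and, forall_eq]

lemma one_add_rad (m : ℕ) (x : G2) : 1 + rad m x = {x : G2 | x m = 0}.indicator 2 x := by
  rcases (by decide : ∀ a : ZMod 2, a = 0 ∨ a = 1) (x m) with h | h <;>
    simp [rad, Set.indicator, h, ZMod.val_one]
  norm_num

lemma dirichlet_two_pow (m : ℕ) (x : G2) :
    dirichlet (2 ^ m) x = (cyl m).indicator (fun _ => (2 : ℝ) ^ m) x := by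
  induction m with
  | zero => simp [dirichlet, walsh_zero, cyl]
  | succ m ih =>
    rw [dirichlet_two_pow_succ, ih, one_add_rad, cyl_succ, Set.inter_comm,
      ← Set.indicator_indicator, pow_succ']
    simp only [Set.indicator, Pi.ofNat_apply]
    split_ifs <;> simp

lemma measurableSet_cyl (m : ℕ) : MeasurableSet (cyl m) := by
  simp only [cyl, Set.ofPred_forall]
  exact MeasurableSet.iInter fun i => MeasurableSet.iInter fun _ =>
    measurableSet_eq_fun (measurable_pi_apply i) measurable_const

lemma integral_dirichlet {n : ℕ} (hn : 0 < n) : ∫ x, dirichlet n x ∂muG = 1 := by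
  simpa [fhat, walsh_zero, hn, dirichlet] using fhat_sum_walsh (Finset.range n) 0

-- `∫ D_{2^m} = 1`, as only `w_0` has nonzero mean, while `D_{2^m} = 2^m 𝟙_{I_m}`.
lemma muG_cyl (m : ℕ) : muG (cyl m) = (2 ^ m)⁻¹ := by
  have h := integral_dirichlet (n := 2 ^ m) (by positivity)
  simp_rw [dirichlet_two_pow] at h
  rw [integral_indicator_const _ (measurableSet_cyl m), smul_eq_mul, measureReal_def] at h
  rw [← ENNReal.ofReal_toReal (measure_ne_top muG _), eq_inv_of_mul_eq_one_left h,
    ENNReal.ofReal_inv_of_pos (by positivity)]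
  norm_num

def dyadicBlock (m : ℕ) (x : G2) : ℝ := dirichlet (2 ^ (m + 1)) x - dirichlet (2 ^ m) x

lemma dyadicBlock_eq_sum (m : ℕ) :
    dyadicBlock m = fun x => ∑ k ∈ Finset.Ico (2 ^ m) (2 ^ (m + 1)), walsh k x := by
  ext x
  rw [dyadicBlock, dirichlet, dirichlet,
    Finset.sum_Ico_eq_sub _ (Nat.pow_le_pow_right two_pos m.le_succ)]

lemma funS_dyadicBlock (m N : ℕ) (x : G2) :
    funS (dyadicBlock m) N x =
      ∑ k ∈ Finset.range N ∩ Finset.Ico (2 ^ m) (2 ^ (m + 1)), walsh k x := by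
  rw [dyadicBlock_eq_sum, funS_sum_walsh]

lemma funS_dyadicBlock_two_pow_add_one (m : ℕ) (x : G2) :
    funS (dyadicBlock m) (2 ^ m + 1) x = walsh (2 ^ m) x := by
  have hm : 2 ^ m < 2 ^ (m + 1) := Nat.pow_lt_pow_right one_lt_two m.lt_succ_self
  have h : Finset.range (2 ^ m + 1) ∩ Finset.Ico (2 ^ m) (2 ^ (m + 1)) = {2 ^ m} := by
    ext k
    simp only [Finset.mem_inter, Finset.mem_range, Finset.mem_Ico, Finset.mem_singleton]
    omega
  rw [funS_dyadicBlock, h, Finset.sum_singleton]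

lemma funS_dyadicBlock_two_pow_of_le {m j : ℕ} (hj : j ≤ m) (x : G2) :
    funS (dyadicBlock m) (2 ^ j) x = 0 := by
  have hjm := Nat.pow_le_pow_right two_pos hj
  have h : Finset.range (2 ^ j) ∩ Finset.Ico (2 ^ m) (2 ^ (m + 1)) = ∅ := by
    ext k
    simp only [Finset.mem_inter, Finset.mem_range, Finset.mem_Ico, Finset.notMem_empty, iff_false]
    omega
  rw [funS_dyadicBlock, h, Finset.sum_empty]

lemma funS_dyadicBlock_two_pow_of_lt {m j : ℕ} (hj : m < j) (x : G2) :
    funS (dyadicBlock m) (2 ^ j) x = dyadicBlock m x := by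
  have hjm := Nat.pow_le_pow_right two_pos hj
  rw [funS_dyadicBlock, Finset.inter_eq_right.2 fun k hk => by
    simp only [Finset.mem_Ico, Finset.mem_range] at hk ⊢; omega, dyadicBlock_eq_sum]

lemma funMax_dyadicBlock (m : ℕ) (x : G2) :
    funMax (dyadicBlock m) x = ‖dyadicBlock m x‖₊ := by
  refine le_antisymm (iSup_le fun j => ?_) (le_iSup_of_le (m + 1) ?_)
  · rcases le_or_gt j m with hj | hj
    · simp [funS_dyadicBlock_two_pow_of_le hj]
    · rw [funS_dyadicBlock_two_pow_of_lt hj]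
  · rw [funS_dyadicBlock_two_pow_of_lt m.lt_succ_self]

lemma abs_dyadicBlock (m : ℕ) (x : G2) :
    |dyadicBlock m x| = (cyl m).indicator (fun _ => (2 : ℝ) ^ m) x := by
  rw [dyadicBlock, dirichlet_two_pow, dirichlet_two_pow, cyl_succ, pow_succ]
  simp only [Set.indicator, Set.mem_inter_iff]
  split_ifs <;> simp_all [mul_two]

lemma funHp_dyadicBlock {p : ℝ} (hp : 0 < p) (m : ℕ) :
    funHp p (dyadicBlock m) = ENNReal.ofReal (2 ^ ((m : ℝ) * (1 - 1 / p))) := by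
  have hmax : ∀ x, funMax (dyadicBlock m) x ^ p = (cyl m).indicator (fun _ => (2 ^ m) ^ p) x := by
    intro x
    rw [funMax_dyadicBlock, ← enorm_eq_nnnorm, Real.enorm_eq_ofReal_abs, abs_dyadicBlock]
    by_cases hx : x ∈ cyl m
    · simp [hx]
    · simp [hx, hp]
  have h2 : (2 : ℝ≥0∞) ^ m = 2 ^ (m : ℝ) := (ENNReal.rpow_natCast 2 m).symm
  rw [funHp, lintegral_congr hmax, lintegral_indicator_const (measurableSet_cyl m), muG_cyl, h2,
    ← ENNReal.rpow_mul, ← ENNReal.rpow_neg, ← ENNReal.rpow_add _ _ two_ne_zero ofNat_ne_top,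
    ← ENNReal.rpow_mul, ← ENNReal.ofReal_rpow_of_pos two_pos, ENNReal.ofReal_ofNat]
  congr 1
  field_simp
  ring

lemma fwn_eq_dyadicBlock (n : ℕ) : fwn n = dyadicBlock (2 * n) := rfl

lemma weakLp_eq_one_of_abs_eq_one {p : ℝ} (hp : 0 < p) {f : G2 → ℝ} (hf : ∀ x, |f x| = 1) :
    weakLp p f = 1 := by
  have hlevel : ∀ t : NNReal, (t : ℝ≥0∞) * muG {x | (t : ℝ) < |f x|} ^ (1 / p)
      = if t < 1 then (t : ℝ≥0∞) else 0 := by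
    intro t
    split_ifs with ht
    · simp [hf, ht]
    · simp [hf, ht, hp]
  simp_rw [weakLp, hlevel]
  refine le_antisymm (iSup_le fun t => ?_) (ENNReal.le_of_forall_nnreal_lt fun r hr => ?_)
  · split_ifs with ht
    exacts [by exact_mod_cast ht.le, zero_le]
  · refine le_iSup_of_le r ?_
    rw [if_pos (by exact_mod_cast hr)]

lemma tendsto_ofReal_two_rpow_mul_nhds_zero {a : ℝ} (ha : a < 0) :
    Tendsto (fun n : ℕ => ENNReal.ofReal (2 ^ ((2 * n : ℝ) * a))) atTop (nhds 0) := by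
  have hexp : Tendsto (fun n : ℕ => (2 * n : ℝ) * a) atTop atBot :=
    (tendsto_natCast_atTop_atTop.const_mul_atTop two_pos).atTop_mul_const_of_neg ha
  simpa using ENNReal.tendsto_ofReal ((tendsto_rpow_atBot_of_base_gt_one 2 one_lt_two).comp hexp)

theorem stmt6 (p : ℝ) (hp : 0 < p) (hp1 : p < 1) :
    (∀ (n : ℕ) (x : G2), funS (fwn n) (2 ^ (2 * n) + 1) x = walsh (2 ^ (2 * n)) x) ∧
    (∀ (n : ℕ) (x : G2), |funS (fwn n) (2 ^ (2 * n) + 1) x| = 1) ∧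
    (∀ n : ℕ, weakLp p (funS (fwn n) (2 ^ (2 * n) + 1)) = 1) ∧
    ∃ c : ℝ, 0 < c ∧
      (∀ n : ℕ, funHp p (fwn n) ≤
        ENNReal.ofReal (c * (2 : ℝ) ^ ((2 * n : ℝ) * (1 - 1 / p)))) ∧
      Tendsto (fun n : ℕ =>
          weakLp p (funS (fwn n) (2 ^ (2 * n) + 1)) / funHp p (fwn n)) atTop (nhds ⊤) := by
  have hS : ∀ (n : ℕ) (x : G2), funS (fwn n) (2 ^ (2 * n) + 1) x = walsh (2 ^ (2 * n)) x :=
    fun n => funS_dyadicBlock_two_pow_add_one (2 * n)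
  have habs : ∀ (n : ℕ) (x : G2), |funS (fwn n) (2 ^ (2 * n) + 1) x| = 1 := fun n x => by
    rw [hS, abs_walsh]
  have hweak : ∀ n : ℕ, weakLp p (funS (fwn n) (2 ^ (2 * n) + 1)) = 1 :=
    fun n => weakLp_eq_one_of_abs_eq_one hp (habs n)
  have hHp : ∀ n : ℕ, funHp p (fwn n) = ENNReal.ofReal (2 ^ ((2 * n : ℝ) * (1 - 1 / p))) :=
    fun n => by rw [fwn_eq_dyadicBlock, funHp_dyadicBlock hp]; push_cast; rfl
  have hexp : 1 - 1 / p < 0 := sub_neg.2 (one_lt_one_div hp hp1)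
  refine ⟨hS, habs, hweak, 1, one_pos, fun n => by rw [one_mul, hHp], ?_⟩
  simpa [hweak, hHp] using tendsto_inv_iff.2 (tendsto_ofReal_two_rpow_mul_nhds_zero hexp)

end
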